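/- Let w ∈ ℕⁿ with |w| even, and let K(λ, μ) be the number of semistandard Young tableaux of shape λ = (|w|/2, |w|/2) and content μ = w. Then K(λ, μ) = π(n, w, |w|/2) − π(n, w, |w|/2 − 1), where π(n, w, k) is the number of ν ∈ ℕⁿ with ∑νᵢ = k and νᵢ ≤ wᵢ for all i. -/

import Mathlib

/-- Semistandardness for a two-row tableau encoded as a pair of rows. -/
def IsSSYT {n k : ℕ} (τ : (Fin k → Fin n) × (Fin k → Fin n)) : Prop :=
  (∀ s t, s ≤ t → τ.1 s ≤ τ.1 t) ∧ (∀ s t, s ≤ t → τ.2 s ≤ τ.2 t) ∧ (∀ t, τ.1 t < τ.2 t)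

/-- The content of a two-row tableau. -/
def content {n k : ℕ} (τ : (Fin k → Fin n) × (Fin k → Fin n)) (i : Fin n) : ℕ :=
  (Finset.univ.filter (fun t => τ.1 t = i)).card +
    (Finset.univ.filter (fun t => τ.2 t = i)).card

/-- π(n,w,k) = #{ν ∈ ℕⁿ : ∑ νᵢ = k, νᵢ ≤ wᵢ for all i}, with k an integer
(so that π = 0 when k < 0). -/
def piCount (n : ℕ) (w : Fin n → ℕ) (k : ℤ) : ℤ :=
  if k < 0 then 0 else
    (((Finset.Nat.antidiagonalTuple n k.toNat).filter (fun ν => ∀ i, ν i ≤ w i)).card : ℤ)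

/-!
A tableau of shape (k, k) is a pair of weakly increasing rows, and a weakly increasing row is
determined by its content. So the tableaux of content w correspond to the contents ν of their
first row: those ν ≤ w with |ν| = k satisfying the column condition `IsBallot w ν`.
Removing the largest letter and summing over its number t of occurrences in the first row, the
number of such ν becomes, by induction on n, a telescoping sum over t ≤ min(wₙ, 2k − |w|) of
differences of π for the shorter alphabet, just as π(n, w, k) − π(n, w, k + 1) is one over
t ≤ wₙ. The two ends agree by the symmetry π(n, w, j) = π(n, w, |w| − j), which for |w| = 2k
also gives π(n, w, k + 1) = π(n, w, k − 1).
-/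

open Finset

section MonotoneTuple

variable {α : Type*} [LinearOrder α] {k : ℕ}

theorem Monotone.eq_of_map_univ_eq {r r' : Fin k → α} (hr : Monotone r) (hr' : Monotone r')
    (h : univ.val.map r = univ.val.map r') : r = r' := by
  rw [Fin.univ_val_map, Fin.univ_val_map, Multiset.coe_eq_coe] at h
  exact List.ofFn_injective (h.eq_of_sortedLE hr.sortedLE_ofFn hr'.sortedLE_ofFn)

theorem Multiset.exists_monotone_map_univ_eq (m : Multiset α) (hm : m.card = k) :
    ∃ r : Fin k → α, Monotone r ∧ univ.val.map r = m := by
  have hl : (m.sort (· ≤ ·)).length = k := by rw [m.length_sort, hm]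
  refine ⟨fun t => (m.sort (· ≤ ·)).get (t.cast hl.symm), ?_, ?_⟩
  · exact fun s t hst => (Multiset.pairwise_sort m _).sortedLE.monotone_get hst
  · rw [Fin.univ_val_map]
    conv_rhs => rw [← m.sort_eq (· ≤ ·)]
    congr 1
    apply List.ext_getElem <;> simp [hl]

theorem forall_lt_iff_card_le {r₁ r₂ : Fin k → α} (h₁ : Monotone r₁) (h₂ : Monotone r₂) :
    (∀ t, r₁ t < r₂ t) ↔ ∀ a, #{t | r₂ t ≤ a} ≤ #{t | r₁ t < a} := by
  refine ⟨fun h a => card_le_card fun t ht => ?_, fun h t => ?_⟩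
  · simp only [mem_filter, mem_univ, true_and] at ht ⊢
    exact (h t).trans_le ht
  · by_contra! hle
    have hlo : Iic t ⊆ ({s | r₂ s ≤ r₂ t} : Finset _) := fun s hs => by
      simpa using h₂ (mem_Iic.1 hs)
    have hhi : ({s | r₁ s < r₂ t} : Finset _) ⊆ Iio t := fun s hs => by
      simp only [mem_filter, mem_univ, true_and] at hs
      exact mem_Iio.2 (lt_of_not_ge fun hts => (hle.trans (h₁ hts)).not_gt hs)
    have := (card_le_card hlo).trans ((h (r₂ t)).trans (card_le_card hhi))
    simp at this

end MonotoneTuple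

section Tableaux

variable {k n : ℕ}

def rowContent (r : Fin k → Fin n) (i : Fin n) : ℕ := #{t | r t = i}

theorem content_eq_rowContent_add (τ : (Fin k → Fin n) × (Fin k → Fin n)) :
    content τ = rowContent τ.1 + rowContent τ.2 :=
  rfl

theorem isSSYT_iff (τ : (Fin k → Fin n) × (Fin k → Fin n)) :
    IsSSYT τ ↔ Monotone τ.1 ∧ Monotone τ.2 ∧ ∀ t, τ.1 t < τ.2 t :=
  Iff.rfl

theorem sum_rowContent (r : Fin k → Fin n) : ∑ i, rowContent r i = k := by
  simp [rowContent, sum_card_fiberwise_eq_card_filter]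

theorem count_map_univ_eq_rowContent (r : Fin k → Fin n) (i : Fin n) :
    (univ.val.map r).count i = rowContent r i := by
  rw [Multiset.count_map, rowContent, card_def, filter_val]
  simp_rw [eq_comm]

theorem Monotone.eq_of_rowContent_eq {r r' : Fin k → Fin n} (hr : Monotone r)
    (hr' : Monotone r') (h : rowContent r = rowContent r') : r = r' :=
  hr.eq_of_map_univ_eq hr' <| Multiset.ext.2 fun i => by
    rw [count_map_univ_eq_rowContent, count_map_univ_eq_rowContent, h]

theorem exists_monotone_rowContent_eq (ν : Fin n → ℕ) (hν : ∑ i, ν i = k) :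
    ∃ r : Fin k → Fin n, Monotone r ∧ rowContent r = ν := by
  obtain ⟨r, hr, hm⟩ := Multiset.exists_monotone_map_univ_eq (k := k)
    (∑ i, ν i • ({i} : Multiset (Fin n))) (by simp [hν])
  refine ⟨r, hr, funext fun i => ?_⟩
  rw [← count_map_univ_eq_rowContent, hm]
  simp [Multiset.count_sum', Multiset.count_singleton]

/-- With μ = w - ν the content of the second row, this says that the second row has at most as
many entries `≤ j` as the first row has entries `< j`. -/
def IsBallot (w ν : Fin n → ℕ) : Prop :=
  ∀ j, ∑ i ≤ j, w i ≤ ∑ i ≤ j, ν i + ∑ i < j, ν i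

instance (w ν : Fin n → ℕ) : Decidable (IsBallot w ν) := by
  unfold IsBallot; infer_instance

def ballotSet (w : Fin n → ℕ) (k : ℤ) : Finset (Fin n → ℕ) :=
  {ν ∈ Iic w | (∑ i, ν i : ℤ) = k ∧ IsBallot w ν}

theorem card_filter_le_eq_sum_rowContent (r : Fin k → Fin n) (j : Fin n) :
    #{t | r t ≤ j} = ∑ i ≤ j, rowContent r i := by
  simp only [rowContent, sum_card_fiberwise_eq_card_filter, mem_Iic]

theorem card_filter_lt_eq_sum_rowContent (r : Fin k → Fin n) (j : Fin n) :
    #{t | r t < j} = ∑ i < j, rowContent r i := by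
  simp only [rowContent, sum_card_fiberwise_eq_card_filter, mem_Iio]

theorem forall_lt_iff_isBallot {r₁ r₂ : Fin k → Fin n} (h₁ : Monotone r₁) (h₂ : Monotone r₂) :
    (∀ t, r₁ t < r₂ t) ↔ IsBallot (rowContent r₁ + rowContent r₂) (rowContent r₁) := by
  rw [forall_lt_iff_card_le h₁ h₂]
  refine forall_congr' fun j => ?_
  rw [card_filter_le_eq_sum_rowContent, card_filter_lt_eq_sum_rowContent]
  simp only [Pi.add_apply, sum_add_distrib]
  omega

theorem card_ssyt_eq_card_ballotSet (w : Fin n → ℕ) (hw : ∑ i, w i = 2 * k) :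
    Nat.card {τ : (Fin k → Fin n) × (Fin k → Fin n) // IsSSYT τ ∧ content τ = w} =
      #(ballotSet w k) := by
  classical
  rw [Nat.card_eq_fintype_card, Fintype.card_subtype]
  refine card_bij (fun τ _ => rowContent τ.1) ?_ ?_ ?_
  · rintro ⟨r₁, r₂⟩ hτ
    obtain ⟨hs, rfl⟩ := (mem_filter.1 hτ).2
    obtain ⟨h₁, h₂, hlt⟩ := (isSSYT_iff _).1 hs
    refine mem_filter.2 ⟨mem_Iic.2 fun i => Nat.le_add_right _ _, ?_,
      (forall_lt_iff_isBallot h₁ h₂).1 hlt⟩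
    exact_mod_cast sum_rowContent r₁
  · rintro ⟨r₁, r₂⟩ hτ ⟨r₁', r₂'⟩ hτ' h
    obtain ⟨hs, hc⟩ := (mem_filter.1 hτ).2
    obtain ⟨hs', hc'⟩ := (mem_filter.1 hτ').2
    obtain ⟨h₁, h₂, -⟩ := (isSSYT_iff _).1 hs
    obtain ⟨h₁', h₂', -⟩ := (isSSYT_iff _).1 hs'
    have hrow₂ : rowContent r₂ = rowContent r₂' := by
      have := hc.trans hc'.symm
      rw [content_eq_rowContent_add, content_eq_rowContent_add] at this
      exact add_left_cancel (h ▸ this)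
    exact Prod.ext (h₁.eq_of_rowContent_eq h₁' h) (h₂.eq_of_rowContent_eq h₂' hrow₂)
  · intro ν hν
    obtain ⟨hle, hsum, hb⟩ := mem_filter.1 hν
    rw [mem_Iic] at hle
    replace hsum : ∑ i, ν i = k := by exact_mod_cast hsum
    have hsum' : ∑ i, (w - ν) i = k := by
      rw [Pi.sub_def, sum_tsub_distrib _ fun i _ => hle i]
      omega
    obtain ⟨r₁, h₁, hc₁⟩ := exists_monotone_rowContent_eq ν hsum
    obtain ⟨r₂, h₂, hc₂⟩ := exists_monotone_rowContent_eq (w - ν) hsum'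
    have hw' : rowContent r₁ + rowContent r₂ = w := by
      rw [hc₁, hc₂, add_tsub_cancel_of_le hle]
    refine ⟨(r₁, r₂), mem_filter.2 ⟨mem_univ _, (isSSYT_iff _).2 ⟨h₁, h₂, ?_⟩, hw'⟩, hc₁⟩
    rwa [forall_lt_iff_isBallot h₁ h₂, hw', hc₁]

end Tableaux

section Counting

variable {n : ℕ}

theorem card_filter_Iic_snoc (w : Fin (n + 1) → ℕ) (Q : (Fin (n + 1) → ℕ) → Prop)
    [DecidablePred Q] :
    #{ν ∈ Iic w | Q ν} =
      ∑ t ∈ range (w (Fin.last n) + 1), #{g ∈ Iic (Fin.init w) | Q (Fin.snoc g t)} := by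
  rw [card_eq_sum_card_fiberwise (f := fun ν => ν (Fin.last n)) fun ν hν =>
    mem_range_succ_iff.2 ((mem_Iic.1 (mem_filter.1 hν).1 : ν ≤ w) _)]
  refine sum_congr rfl fun t ht => card_nbij' Fin.init (Fin.snoc · t) ?_ ?_ ?_ ?_
  · intro ν hν
    simp only [mem_coe, mem_filter, mem_Iic] at hν ⊢
    obtain ⟨⟨hle, hQ⟩, rfl⟩ := hν
    exact ⟨fun i => hle i.castSucc, by rwa [Fin.snoc_init_self]⟩
  · intro g hg
    simp only [mem_coe, mem_filter, mem_Iic, Fin.snoc_last, and_true] at hg ⊢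
    refine ⟨fun i => Fin.lastCases ?_ (fun i => ?_) i, hg.2⟩
    · simpa using mem_range_succ_iff.1 ht
    · show Fin.snoc (α := fun _ => ℕ) g t i.castSucc ≤ w i.castSucc
      rw [Fin.snoc_castSucc]
      exact hg.1 i
  · intro ν hν
    obtain ⟨-, rfl⟩ := mem_filter.1 hν
    exact Fin.snoc_init_self ν
  · intro g _
    exact Fin.init_snoc _ _

theorem piCount_eq_card (w : Fin n → ℕ) (j : ℤ) :
    piCount n w j = #{ν ∈ Iic w | (∑ i, ν i : ℤ) = j} := by
  unfold piCount
  split_ifs with hj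
  · refine (Nat.cast_eq_zero.2 (card_eq_zero.2 (filter_eq_empty_iff.2 fun ν _ h => ?_))).symm
    have : (0 : ℤ) ≤ ∑ i, (ν i : ℤ) := by positivity
    omega
  · congr 2
    ext ν
    simp only [mem_filter, Nat.mem_antidiagonalTuple, mem_Iic, Pi.le_def]
    rw [and_comm, ← Nat.cast_sum]
    exact and_congr_right fun _ => by omega

theorem piCount_sum_sub (w : Fin n → ℕ) (j : ℤ) :
    piCount n w (∑ i, (w i : ℤ) - j) = piCount n w j := by
  have hsum : ∀ ν ≤ w, ∑ i, ((w - ν) i : ℤ) = ∑ i, (w i : ℤ) - ∑ i, (ν i : ℤ) := fun ν h => by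
    rw [← sum_sub_distrib]
    exact sum_congr rfl fun i _ => Nat.cast_sub (h i)
  have hinv : ∀ ν ≤ w, w - (w - ν) = ν := fun ν h => funext fun i => Nat.sub_sub_self (h i)
  rw [piCount_eq_card, piCount_eq_card]
  congr 1
  refine card_nbij' (w - ·) (w - ·) ?_ ?_ ?_ ?_ <;> intro ν hν <;>
    obtain ⟨hle, hν⟩ := mem_filter.1 hν <;> rw [mem_Iic] at hle
  · exact mem_filter.2 ⟨mem_Iic.2 tsub_le_self, by linarith [hsum ν hle]⟩
  · exact mem_filter.2 ⟨mem_Iic.2 tsub_le_self, by linarith [hsum ν hle]⟩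
  · exact hinv ν hle
  · exact hinv ν hle

theorem piCount_succ (w : Fin (n + 1) → ℕ) (j : ℤ) :
    piCount (n + 1) w j =
      ∑ t ∈ range (w (Fin.last n) + 1), piCount n (Fin.init w) (j - t) := by
  simp only [piCount_eq_card, card_filter_Iic_snoc, Nat.cast_sum]
  refine sum_congr rfl fun t _ => congrArg _ (congrArg _ (filter_congr fun g _ => ?_))
  simp only [Fin.sum_univ_castSucc, Fin.snoc_castSucc, Fin.snoc_last]
  omega

theorem sum_range_sub_sub_add_one (f : ℤ → ℤ) (j : ℤ) (m : ℕ) :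
    ∑ t ∈ range m, (f (j - t) - f (j - t + 1)) = f (j - m + 1) - f (j + 1) := by
  have := sum_range_sub (fun t : ℕ => f (j + 1 - t)) m
  simp only [Nat.cast_add, Nat.cast_one, Nat.cast_zero, sub_zero] at this
  convert this using 3 with t <;> ring_nf

theorem piCount_succ_sub (w : Fin (n + 1) → ℕ) (j : ℤ) :
    piCount (n + 1) w j - piCount (n + 1) w (j + 1) =
      piCount n (Fin.init w) (j - w (Fin.last n)) - piCount n (Fin.init w) (j + 1) := by
  rw [piCount_succ, piCount_succ, ← sum_sub_distrib]
  have := sum_range_sub_sub_add_one (piCount n (Fin.init w)) j (w (Fin.last n) + 1)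
  convert this using 3 with t
  · ring_nf
  · push_cast; ring_nf

theorem piCount_zero (w : Fin 0 → ℕ) (j : ℤ) : piCount 0 w j = if j = 0 then 1 else 0 := by
  rcases eq_or_ne j 0 with rfl | hj
  · simp [piCount_eq_card, Pi.card_Iic]
  · simp [piCount_eq_card, hj, Ne.symm hj]

theorem isBallot_snoc (w : Fin (n + 1) → ℕ) (g : Fin n → ℕ) (t : ℕ) :
    IsBallot w (Fin.snoc g t) ↔ IsBallot (Fin.init w) g ∧ ∑ i, w i ≤ 2 * ∑ i, g i + t := by
  unfold IsBallot
  rw [Fin.forall_fin_succ']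
  refine and_congr (forall_congr' fun j => ?_) ?_
  · simp [Fin.sum_Iic_castSucc, Fin.sum_Iio_castSucc, Fin.init]
  · rw [show Iic (Fin.last n) = univ from Iic_top, Fin.Iio_last_eq_map, sum_map]
    simp [Fin.sum_univ_castSucc]
    omega

theorem card_ballotSet_succ (w : Fin (n + 1) → ℕ) (k : ℤ) :
    (#(ballotSet w k) : ℤ) =
      ∑ t ∈ range (w (Fin.last n) + 1) with ∑ i, (w i : ℤ) + ((t : ℕ) : ℤ) ≤ 2 * k,
        (#(ballotSet (Fin.init w) (k - t)) : ℤ) := by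
  rw [ballotSet, card_filter_Iic_snoc, sum_filter, Nat.cast_sum]
  refine sum_congr rfl fun t _ => ?_
  split_ifs with ht
  · refine congrArg _ (congrArg _ (filter_congr fun g _ => ?_))
    simp only [isBallot_snoc, ← Nat.cast_sum, Fin.sum_snoc] at ht ⊢
    exact ⟨fun ⟨_, hb, _⟩ => ⟨by omega, hb⟩, fun ⟨_, hb⟩ => ⟨by omega, hb, by omega⟩⟩
  · refine Nat.cast_eq_zero.2 (card_eq_zero.2 (filter_eq_empty_iff.2 fun g _ => ?_))
    simp only [isBallot_snoc, ← Nat.cast_sum, Fin.sum_snoc] at ht ⊢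
    rintro ⟨hsum, -, hW⟩
    omega

theorem card_ballotSet (w : Fin n → ℕ) (k : ℤ) (hk : ∑ i, (w i : ℤ) ≤ 2 * k) :
    (#(ballotSet w k) : ℤ) = piCount n w k - piCount n w (k + 1) := by
  induction n generalizing k with
  | zero =>
    simp only [univ_eq_empty, sum_empty] at hk
    rw [piCount_zero, piCount_zero, if_neg (show k + 1 ≠ 0 by omega), sub_zero]
    split_ifs with h0 <;> simp [ballotSet, IsBallot, Pi.card_Iic, h0, eq_comm]
  | succ n ih =>
    rw [card_ballotSet_succ, piCount_succ_sub]
    set a := w (Fin.last n)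
    set w' := Fin.init w
    set W := ∑ i, (w i : ℤ)
    have hW : W = ∑ i, (w' i : ℤ) + a := Fin.sum_univ_castSucc _
    have hstep : ∀ t ∈ {t ∈ range (a + 1) | W + ((t : ℕ) : ℤ) ≤ 2 * k},
        (#(ballotSet w' (k - t)) : ℤ) = piCount n w' (k - t) - piCount n w' (k - t + 1) := by
      intro t ht
      obtain ⟨ht, htk⟩ := mem_filter.1 ht
      have := mem_range_succ_iff.1 ht
      exact ih w' (k - t) (by omega)
    rw [sum_congr rfl hstep]
    by_cases ha : W + a ≤ 2 * k
    · rw [filter_true_of_mem fun t ht => by have := mem_range_succ_iff.1 ht; omega,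
        sum_range_sub_sub_add_one]
      push_cast
      ring_nf
    · have hT : {t ∈ range (a + 1) | W + ((t : ℕ) : ℤ) ≤ 2 * k} =
          range ((2 * k - W).toNat + 1) := by
        ext t
        simp only [mem_filter, mem_range]
        omega
      -- the sum stops at `T = 2k - W`, and `k - T = W - k = ∑ w' - (k - a)`
      rw [hT, sum_range_sub_sub_add_one, ← piCount_sum_sub]
      congr 2
      omega

end Counting

/-- For w ∈ ℕⁿ with |w| even, the number of semistandard Young tableaux of shape
(|w|/2, |w|/2) and content w equals π(n, w, |w|/2) − π(n, w, |w|/2 − 1). -/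
theorem stmt5 (n : ℕ) (w : Fin n → ℕ) (hw : Even (∑ i, w i)) :
    (Nat.card {τ : (Fin ((∑ i, w i) / 2) → Fin n) × (Fin ((∑ i, w i) / 2) → Fin n) //
        IsSSYT τ ∧ content τ = w} : ℤ)
      = piCount n w (((∑ i, w i) / 2 : ℕ) : ℤ)
          - piCount n w ((((∑ i, w i) / 2 : ℕ) : ℤ) - 1) := by
  obtain ⟨k, hk⟩ := hw
  have hW : ∑ i, (w i : ℤ) = 2 * k := by rw [← Nat.cast_sum, hk]; push_cast; ring
  rw [show (∑ i, w i) / 2 = k by omega, card_ssyt_eq_card_ballotSet w (by omega),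
    card_ballotSet w k hW.le, ← piCount_sum_sub w (k - 1)]
  congr 2
  omega
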